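/- In the Zhu algebra A(V) = V/O(V), the image [1] of the vacuum vector is a two-sided identity element. -/

import Mathlib

/-- Generalized binomial coefficient `C(n, k)` for `n : ℤ`, valued in `ℂ`. -/
noncomputable def cbinom (n : ℤ) (k : ℕ) : ℂ :=
  (∏ i ∈ Finset.range k, ((n : ℂ) - (i : ℂ))) / (Nat.factorial k : ℂ)

/-- A vertex operator algebra structure on a complex vector space `V`. -/
structure VOA (V : Type) [AddCommGroup V] [Module ℂ V] where
  mode : V → ℤ → Module.End ℂ V
  vacuum : V
  conformal : V
  grading : ℤ → Submodule ℂ V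
  internal : Function.Bijective (DirectSum.coeLinearMap grading)
  mode_add : ∀ (u v : V) (n : ℤ), mode (u + v) n = mode u n + mode v n
  mode_smul : ∀ (c : ℂ) (u : V) (n : ℤ), mode (c • u) n = c • mode u n
  truncation : ∀ u v : V, ∃ N : ℤ, ∀ n : ℤ, N ≤ n → mode u n v = 0
  vacuum_mem : vacuum ∈ grading 0
  conformal_mem : conformal ∈ grading 2
  vacuum_mode : ∀ (v : V) (n : ℤ), mode vacuum n v = if n = -1 then v else 0
  creation : ∀ (u : V) (n : ℤ), 0 ≤ n → mode u n vacuum = 0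
  creation_neg_one : ∀ u : V, mode u (-1) vacuum = u
  L0_eigen : ∀ (n : ℤ) (u : V), u ∈ grading n → mode conformal 1 u = (n : ℂ) • u
  Lneg1_deriv : ∀ (u : V) (n : ℤ), mode (mode conformal 0 u) n = (-n : ℂ) • mode u (n - 1)
  grading_mode : ∀ (r s m : ℤ) (u v : V), u ∈ grading r → v ∈ grading s →
    mode u m v ∈ grading (r + s - m - 1)
  bounded_below : ∃ N : ℤ, ∀ n : ℤ, n < N → grading n = ⊥
  fin_dim : ∀ n : ℤ, FiniteDimensional ℂ (grading n)
  borcherds : ∀ (p q r : ℤ) (u v w : V),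
    (∑ᶠ i : ℕ, cbinom p i • mode (mode u (r + i) v) (p + q - i) w) =
    ∑ᶠ i : ℕ, ((-1 : ℂ) ^ i * cbinom r i) •
      (mode u (p + r - i) (mode v (q + i) w)
        - (-1 : ℂ) ^ r • mode v (q + r - i) (mode u (p + i) w))

variable {V : Type} [AddCommGroup V] [Module ℂ V]

/-- Projection onto the weight-`n` subspace. -/
noncomputable def VOA.proj (d : VOA V) (n : ℤ) : V →ₗ[ℂ] V :=
  (d.grading n).subtype ∘ₗ (DirectSum.component ℂ ℤ (fun m => d.grading m) n) ∘ₗ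
    (LinearEquiv.ofBijective (DirectSum.coeLinearMap d.grading) d.internal).symm.toLinearMap

/-- `Res_z (1+z)^N z^{-k} Y(u,z)v` for a vector `u` regarded as having weight contribution `N`. -/
noncomputable def VOA.hres (d : VOA V) (N k : ℤ) (u v : V) : V :=
  ∑ᶠ i : ℕ, cbinom N i • d.mode u ((i : ℤ) - k) v

/-- `Res_z (1+z)^{wt u + m} z^{-k} Y(u,z)v`, extended bilinearly from homogeneous `u`. -/
noncomputable def VOA.bres (d : VOA V) (m k : ℤ) (u v : V) : V :=
  ∑ᶠ n : ℤ, d.hres (n + m) k (d.proj n u) v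

/-- The Zhu product `u * v`. -/
noncomputable def VOA.star (d : VOA V) (u v : V) : V := d.bres 0 1 u v

/-- The Zhu circle product `u ∘ v`. -/
noncomputable def VOA.circ (d : VOA V) (u v : V) : V := d.bres 0 2 u v

/-- The subspace `O(V)` spanned by all `u ∘ v`. -/
def VOA.Ozhu (d : VOA V) : Submodule ℂ V := Submodule.span ℂ {w : V | ∃ u v : V, w = d.circ u v}

/-- The product `u ∘_n v`. -/
noncomputable def VOA.circn (d : VOA V) (n : ℕ) (u v : V) : V := d.bres n (2 * n + 2) u v

/-- The product `u *_n v` of Dong–Li–Mason. -/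
noncomputable def VOA.starn (d : VOA V) (n : ℕ) (u v : V) : V :=
  ∑ m ∈ Finset.range (n + 1),
    ((-1 : ℂ) ^ m * cbinom ((m : ℤ) + (n : ℤ)) n) • d.bres n ((n : ℤ) + (m : ℤ) + 1) u v

/-- The subspace `O_n(V)`. -/
def VOA.On (d : VOA V) (n : ℕ) : Submodule ℂ V :=
  Submodule.span ℂ ({w : V | ∃ u v : V, w = d.circn n u v} ∪
    {w : V | ∃ u : V, w = d.mode d.conformal 0 u + d.mode d.conformal 1 u})

/-- The Dong–Jiang product `u *_{m,p}^n v`. -/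
noncomputable def VOA.starmpn (d : VOA V) (m p n : ℕ) (u v : V) : V :=
  ∑ i ∈ Finset.range (p + 1),
    ((-1 : ℂ) ^ i * cbinom ((m : ℤ) + (n : ℤ) - (p : ℤ) + (i : ℤ)) i) •
      d.bres m ((m : ℤ) + (n : ℤ) - (p : ℤ) + (i : ℤ) + 1) u v

/-- The Dong–Jiang product `u ∘_m^n v`. -/
noncomputable def VOA.circmn (d : VOA V) (n m : ℕ) (u v : V) : V :=
  d.bres m ((n : ℤ) + (m : ℤ) + 2) u v

/-- The subspace `O_{n,m}(V) = O'_{n,m}(V) + O''_{n,m}(V) + O'''_{n,m}(V)` of Dong–Jiang. -/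
def VOA.Onm (d : VOA V) (n m : ℕ) : Submodule ℂ V :=
  Submodule.span ℂ (
    {w : V | ∃ u v : V, w = d.circmn n m u v} ∪
    {w : V | ∃ u : V, w = d.mode d.conformal 0 u + d.mode d.conformal 1 u
        + (((m : ℂ) - (n : ℂ)) • u)} ∪
    {w : V | ∃ (u a b c : V) (p₁ p₂ p₃ : ℕ), w = d.starmpn m p₃ n u
        (d.starmpn m p₁ p₃ (d.starmpn p₁ p₂ p₃ a b) c
          - d.starmpn m p₂ p₃ a (d.starmpn m p₁ p₂ b c))} ∪
    {w : V | ∃ (p : ℕ) (u x v : V), x ∈ d.On p ∧ w = d.starmpn m p n (d.starmpn p p n u x) v})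

/-- The subspace `C_2(V)` spanned by the `u_{-2} v`. -/
def VOA.C2 (d : VOA V) : Submodule ℂ V := Submodule.span ℂ {w : V | ∃ u v : V, w = d.mode u (-2) v}

/-- `V` is a simple vertex operator algebra: its only ideals are `0` and `V`. -/
def VOA.IsSimpleVOA (d : VOA V) : Prop :=
  (∃ v : V, v ≠ 0) ∧ ∀ P : Submodule ℂ V,
    (∀ (u : V) (n : ℤ), ∀ w ∈ P, d.mode u n w ∈ P) → P = ⊥ ∨ P = ⊤

/-- A weak module for the vertex operator algebra `d`. -/
structure WeakMod (d : VOA V) (M : Type) [AddCommGroup M] [Module ℂ M] where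
  act : V → ℤ → Module.End ℂ M
  act_add : ∀ (u v : V) (n : ℤ), act (u + v) n = act u n + act v n
  act_smul : ∀ (c : ℂ) (u : V) (n : ℤ), act (c • u) n = c • act u n
  truncation : ∀ (u : V) (w : M), ∃ N : ℤ, ∀ n : ℤ, N ≤ n → act u n w = 0
  vacuum_act : ∀ (w : M) (n : ℤ), act d.vacuum n w = if n = -1 then w else 0
  borcherds : ∀ (p q r : ℤ) (u v : V) (w : M),
    (∑ᶠ i : ℕ, cbinom p i • act (d.mode u (r + i) v) (p + q - i) w) =
    ∑ᶠ i : ℕ, ((-1 : ℂ) ^ i * cbinom r i) •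
      (act u (p + r - i) (act v (q + i) w)
        - (-1 : ℂ) ^ r • act v (q + r - i) (act u (p + i) w))

/-- An admissible (ℤ₊-graded) module for the vertex operator algebra `d`. -/
structure AdmMod (d : VOA V) (M : Type) [AddCommGroup M] [Module ℂ M]
    extends WeakMod d M where
  gr : ℤ → Submodule ℂ M
  gr_internal : Function.Bijective (DirectSum.coeLinearMap gr)
  gr_neg : ∀ n : ℤ, n < 0 → gr n = ⊥
  gr_act : ∀ (r : ℤ) (u : V), u ∈ d.grading r → ∀ (m n : ℤ) (w : M), w ∈ gr n →
    act u m w ∈ gr (r + n - m - 1)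

variable {M : Type} [AddCommGroup M] [Module ℂ M]

/-- The zero-mode `o(v) = v_{wt v - 1}`, extended linearly from homogeneous `v`. -/
noncomputable def WeakMod.o {d : VOA V} (W : WeakMod d M) (v : V) (w : M) : M :=
  ∑ᶠ r : ℤ, W.act (d.proj r v) (r - 1) w

/-- The mode `o_t(v) = v_{wt v - 1 - t}`, extended linearly from homogeneous `v`. -/
noncomputable def WeakMod.ot {d : VOA V} (W : WeakMod d M) (t : ℤ) (v : V) (w : M) : M :=
  ∑ᶠ r : ℤ, W.act (d.proj r v) (r - 1 - t) w

/-- The subspace `Ω_n(M)` of a weak module. -/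
def WeakMod.OmegaSet {d : VOA V} (W : WeakMod d M) (n : ℕ) : Set M :=
  {w : M | ∀ (r : ℤ) (u : V), u ∈ d.grading r → ∀ m : ℤ, m > r - 1 + (n : ℤ) → W.act u m w = 0}

/-- A subspace stable under all modes. -/
def WeakMod.IsStable {d : VOA V} (W : WeakMod d M) (P : Submodule ℂ M) : Prop :=
  ∀ (u : V) (n : ℤ), ∀ w ∈ P, W.act u n w ∈ P

/-- A subspace compatible with the grading of an admissible module. -/
def AdmMod.IsGraded {d : VOA V} (A : AdmMod d M) (P : Submodule ℂ M) : Prop :=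
  P = ⨆ n : ℤ, (P ⊓ A.gr n)

/-- `P` is an irreducible admissible submodule. -/
def AdmMod.IrredSub {d : VOA V} (A : AdmMod d M) (P : Submodule ℂ M) : Prop :=
  P ≠ ⊥ ∧ A.toWeakMod.IsStable P ∧ A.IsGraded P ∧
    ∀ Q : Submodule ℂ M, Q ≤ P → A.toWeakMod.IsStable Q → A.IsGraded Q → Q = ⊥ ∨ Q = P

/-- The admissible module is irreducible. -/
def AdmMod.IsIrreducible {d : VOA V} (A : AdmMod d M) : Prop :=
  (∃ w : M, w ≠ 0) ∧
    ∀ P : Submodule ℂ M, A.toWeakMod.IsStable P → A.IsGraded P → P = ⊥ ∨ P = ⊤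

/-- Rationality: every admissible module is a direct sum of irreducible admissible submodules. -/
def Rational (d : VOA V) : Prop :=
  ∀ (M : Type) [AddCommGroup M] [Module ℂ M] (A : AdmMod d M),
    ∃ (ι : Type) (f : ι → Submodule ℂ M),
      (∀ i, A.IrredSub (f i)) ∧ iSupIndep f ∧ (⨆ i, f i) = ⊤

/-- Equivalence of admissible modules. -/
def AdmEquiv {d : VOA V} {M₁ M₂ : Type} [AddCommGroup M₁] [Module ℂ M₁]
    [AddCommGroup M₂] [Module ℂ M₂] (A₁ : AdmMod d M₁) (A₂ : AdmMod d M₂) : Prop :=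
  ∃ e : M₁ ≃ₗ[ℂ] M₂, ∀ (u : V) (n : ℤ) (w : M₁), e (A₁.act u n w) = A₂.act u n (e w)

/-- An ordinary-module structure on a weak module: a `ℂ`-grading by finite dimensional
`L(0)`-eigenspaces, bounded below in each coset of `ℤ`. -/
structure OrdinaryStruct {d : VOA V} (W : WeakMod d M) where
  grc : ℂ → Submodule ℂ M
  internal : Function.Bijective (DirectSum.coeLinearMap grc)
  eigen : ∀ (lam : ℂ) (w : M), w ∈ grc lam → W.act d.conformal 1 w = lam • w
  findim : ∀ lam : ℂ, FiniteDimensional ℂ (grc lam)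
  bounded : ∀ lam : ℂ, ∃ N : ℤ, ∀ n : ℤ, n < N → grc (lam + (n : ℂ)) = ⊥

/-- An admissible module is ordinary. -/
def AdmMod.IsOrdinary {d : VOA V} (A : AdmMod d M) : Prop :=
  Nonempty (OrdinaryStruct A.toWeakMod)

/-- A realization of the quotient associative algebra `V/Osub` with product induced by `mu`. -/
structure Realization (Osub : Submodule ℂ V) (mu : V → V → V) (one : V) where
  carrier : Type
  [ring : Ring carrier]
  [alg : Algebra ℂ carrier]
  emb : V →ₗ[ℂ] carrier
  surj : Function.Surjective emb
  ker_eq : LinearMap.ker emb = Osub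
  mul_compat : ∀ u v : V, emb (mu u v) = emb u * emb v
  one_compat : emb one = 1

/-- The realized algebra is semisimple. -/
def Realization.Semisimple {Osub : Submodule ℂ V} {mu : V → V → V} {one : V}
    (R : Realization Osub mu one) : Prop :=
  letI := R.ring; IsSemisimpleRing R.carrier

/-- The realized algebra is finite dimensional over `ℂ`. -/
def Realization.FinDim {Osub : Submodule ℂ V} {mu : V → V → V} {one : V}
    (R : Realization Osub mu one) : Prop :=
  letI := R.ring; letI := R.alg; FiniteDimensional ℂ R.carrier

/-- A module over the quotient algebra `V/Osub`, given as a representation of `V`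
killing `Osub` and multiplicative for `mu`. -/
structure RepOf (Osub : Submodule ℂ V) (mu : V → V → V) (one : V)
    (U : Type) [AddCommGroup U] [Module ℂ U] where
  rep : V →ₗ[ℂ] Module.End ℂ U
  kills : ∀ v ∈ Osub, rep v = 0
  mul_compat : ∀ u v : V, rep (mu u v) = rep u * rep v
  one_compat : rep one = 1

/-- Simplicity of such a representation. -/
def RepOf.IsSimple {Osub : Submodule ℂ V} {mu : V → V → V} {one : V}
    {U : Type} [AddCommGroup U] [Module ℂ U] (Z : RepOf Osub mu one U) : Prop :=
  (∃ u : U, u ≠ 0) ∧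
    ∀ P : Submodule ℂ U, (∀ v : V, ∀ x ∈ P, Z.rep v x ∈ P) → P = ⊥ ∨ P = ⊤

/-- Equivalence of two such representations. -/
def RepEquiv {Osub : Submodule ℂ V} {mu : V → V → V} {one : V}
    {U₁ U₂ : Type} [AddCommGroup U₁] [Module ℂ U₁] [AddCommGroup U₂] [Module ℂ U₂]
    (Z₁ : RepOf Osub mu one U₁) (Z₂ : RepOf Osub mu one U₂) : Prop :=
  ∃ e : U₁ ≃ₗ[ℂ] U₂, ∀ (v : V) (x : U₁), e (Z₁.rep v x) = Z₂.rep v (e x)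


lemma cbinom_zero' (n : ℤ) : cbinom n 0 = 1 := by simp [cbinom]

lemma VOA.mode_zero' (d : VOA V) (n : ℤ) : d.mode 0 n = 0 := by
  have h := d.mode_smul 0 0 n
  simpa using h

lemma VOA.proj_of_mem (d : VOA V) {r : ℤ} {u : V} (hu : u ∈ d.grading r) (n : ℤ) :
    d.proj n u = if n = r then u else 0 := by
  classical
  have hmain : d.proj n u =
      (((LinearEquiv.ofBijective (DirectSum.coeLinearMap d.grading) d.internal).symm u) n : V) :=
    rfl
  by_cases h : n = r
  · subst h
    rw [hmain, DirectSum.IsInternal.ofBijective_coeLinearMap_of_mem d.internal hu, if_pos rfl]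
  · rw [hmain, DirectSum.IsInternal.ofBijective_coeLinearMap_of_mem_ne d.internal
      (fun hrn => h hrn.symm) hu, if_neg h]
    rfl

lemma VOA.finsum_proj (d : VOA V) (u : V) : ∑ᶠ n : ℤ, d.proj n u = u := by
  classical
  set x := (LinearEquiv.ofBijective (DirectSum.coeLinearMap d.grading) d.internal).symm u with hx
  have h1 : ∀ n, d.proj n u = (x n : V) := fun n => rfl
  have h2 : DirectSum.coeLinearMap d.grading x = u :=
    (LinearEquiv.ofBijective (DirectSum.coeLinearMap d.grading) d.internal).apply_symm_apply u
  calc ∑ᶠ n : ℤ, d.proj n u = ∑ᶠ n : ℤ, (x n : V) := finsum_congr h1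
    _ = ∑ n ∈ DFinsupp.support x, (x n : V) :=
        finsum_eq_finset_sum_of_support_subset _ (DirectSum.support_subset _ x)
    _ = u := by
        rw [← h2, DirectSum.coeLinearMap_eq_dfinsuppSum, DFinsupp.sum]

lemma VOA.hres_vacuum (d : VOA V) (N : ℤ) (w : V) : d.hres N 1 w d.vacuum = w := by
  unfold VOA.hres
  rw [finsum_eq_single _ 0]
  · have : ((0 : ℕ) : ℤ) - 1 = -1 := by norm_num
    rw [this, d.creation_neg_one, cbinom_zero', one_smul]
  · intro i hi
    have hi' : (0 : ℤ) ≤ (i : ℤ) - 1 := by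
      have : 1 ≤ i := Nat.one_le_iff_ne_zero.mpr hi
      omega
    rw [d.creation w _ hi', smul_zero]

lemma VOA.star_vacuum (d : VOA V) (u : V) : d.star u d.vacuum = u := by
  unfold VOA.star VOA.bres
  calc (∑ᶠ n : ℤ, d.hres (n + 0) 1 (d.proj n u) d.vacuum)
      = ∑ᶠ n : ℤ, d.proj n u := by
        refine finsum_congr fun n => ?_
        rw [add_zero, d.hres_vacuum]
    _ = u := d.finsum_proj u

lemma VOA.vacuum_star (d : VOA V) (v : V) : d.star d.vacuum v = v := by
  unfold VOA.star VOA.bres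
  rw [finsum_eq_single _ 0]
  · rw [d.proj_of_mem d.vacuum_mem 0, if_pos rfl, add_zero]
    unfold VOA.hres
    rw [finsum_eq_single _ 0]
    · have h0 : ((0 : ℕ) : ℤ) - 1 = -1 := by norm_num
      rw [h0, d.vacuum_mode, if_pos rfl, cbinom_zero', one_smul]
    · intro i hi
      have : ((i : ℤ) - 1) ≠ -1 := by
        have : 1 ≤ i := Nat.one_le_iff_ne_zero.mpr hi
        omega
      rw [d.vacuum_mode, if_neg this, smul_zero]
  · intro n hn
    rw [d.proj_of_mem d.vacuum_mem n, if_neg hn]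
    unfold VOA.hres
    have : ∀ i : ℕ, cbinom (n + 0) i • d.mode 0 ((i : ℤ) - 1) v = 0 := by
      intro i
      rw [d.mode_zero']
      simp
    rw [finsum_congr this, finsum_zero]

/-- the image of the vacuum is a two-sided identity of `A(V)`. -/
theorem stmt2 (d : VOA V) (mul : (V ⧸ d.Ozhu) → (V ⧸ d.Ozhu) → (V ⧸ d.Ozhu))
    (hmul : ∀ u v : V, mul (d.Ozhu.mkQ u) (d.Ozhu.mkQ v) = d.Ozhu.mkQ (d.star u v)) :
    ∀ a : V ⧸ d.Ozhu,
      mul (d.Ozhu.mkQ d.vacuum) a = a ∧ mul a (d.Ozhu.mkQ d.vacuum) = a := by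
  intro a
  obtain ⟨v, rfl⟩ := d.Ozhu.mkQ_surjective a
  constructor
  · rw [hmul, d.vacuum_star]
  · rw [hmul, d.star_vacuum]
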